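/- arXiv:1805.06216 — 8 statements merged into one kernel-verified Lean document; each statement's English description precedes it below -/
import Mathlib

section
/- The Drinker Paradox implies the Constant Domain principle: for any predicate P on α and proposition Q, if ∃y, (P y → ∀x, P x), then (∀x, (P x ∨ Q)) → ((∀x, P x) ∨ Q), constructively. -/
theorem dp_implies_cd (α : Type*) (P : α → Prop) (Q : Prop)
    (DP : ∃ y, (P y → ∀ x, P x)) :
    (∀ x, P x ∨ Q) → (∀ x, P x) ∨ Q := by
  intro h
  obtain ⟨y, hy⟩ := DP
  exact (h y).imp_left hy
end

section
/- The Universal Double Negation Shift is constructively equivalent to the Weak General Markov Principle: for any predicate P on α, ((∀x, ¬¬P x) → ¬¬∀x, P x) holds if and only if (¬(∀x, P x) → ¬¬∃x, ¬P x), and both directions are provable constructively (schematically, over the same predicate). -/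
theorem dnsu_iff_wgmp (α : Type*) (P : α → Prop) :
    ((∀ x, ¬¬P x) → ¬¬(∀ x, P x)) ↔ (¬(∀ x, P x) → ¬¬(∃ x, ¬P x)) := by
  rw [← not_exists (p := fun x => ¬P x)]
  exact imp_not_comm
end

section
/- Two-termed reduction of DP to DGP with EFQ: in a type α with two elements 0 and 1 and a predicate D with D 0, ¬D 1, and ∀x, D x ∨ ¬D x, and assuming ex falso (which holds in Lean), the Drinker Paradox for the predicate Q x := (D x → A) ∧ (¬D x → B) implies (A → B) ∨ (B → A), constructively. -/
theorem dp_tt_efq_implies_dgp (α : Type*) (a₀ a₁ : α) (D : α → Prop)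
    (hD0 : D a₀) (hD1 : ¬D a₁) (hDx : ∀ x, D x ∨ ¬D x) (A B : Prop)
    (DP : ∃ y, (((D y → A) ∧ (¬D y → B)) → ∀ x, (D x → A) ∧ (¬D x → B))) :
    (A → B) ∨ (B → A) := by
  obtain ⟨y, hy⟩ := DP
  -- By ex falso, the conjunct of `Q y` on the side of `D` that `y` is not on holds vacuously,
  -- so `Q y` follows from one of `A`, `B`; then `Q` at the opposite point yields the other.
  rcases hDx y with hDy | hnDy
  · exact Or.inl fun hA => (hy ⟨fun _ => hA, fun hn => absurd hDy hn⟩ a₁).2 hD1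
  · exact Or.inr fun hB => (hy ⟨fun hd => absurd hd hnDy, fun _ => hB⟩ a₀).1 hD0
end

section
/- Two-termed reduction of DP to WLEM: in a type α with elements a₀, a₁ and a decidable predicate D satisfying D a₀ and ¬D a₁, the Drinker Paradox for Q x := (D x → ¬¬A) ∧ (¬D x → ¬A) implies ¬A ∨ ¬¬A, constructively (no ex falso needed). -/
theorem dp_tt_implies_wlem (α : Type*) (a₀ a₁ : α) (D : α → Prop)
    (hD0 : D a₀) (hD1 : ¬D a₁) (hDx : ∀ x, D x ∨ ¬D x) (A : Prop)
    (DP : ∃ y, (((D y → ¬¬A) ∧ (¬D y → ¬A)) → ∀ x, (D x → ¬¬A) ∧ (¬D x → ¬A))) :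
    ¬A ∨ ¬¬A := by
  obtain ⟨y, hy⟩ := DP
  -- In each case the clause of `Q y` whose premise contradicts the case holds outright,
  -- so no ex falso is needed; the other clause comes from the hypothesis being refuted.
  rcases hDx y with hDy | hDy
  · refine Or.inl fun hA => ?_
    have hQy : (D y → ¬¬A) ∧ (¬D y → ¬A) := ⟨fun _ hnA => hnA hA, fun hnDy _ => hnDy hDy⟩
    exact (hy hQy a₁).2 hD1 hA
  · refine Or.inr fun hnA => ?_
    have hQy : (D y → ¬¬A) ∧ (¬D y → ¬A) := ⟨fun hD _ => hDy hD, fun _ => hnA⟩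
    exact (hy hQy a₀).1 hD0 hnA
end

section
/- Two-termed reduction of GMP to WLEM: in a type α with elements a₀, a₁ and a decidable predicate D satisfying D a₀ and ¬D a₁, the General Markov Principle for Q x := (D x → ¬¬A) ∧ (¬D x → ¬A) implies ¬A ∨ ¬¬A, constructively. -/
/-!
`Q a₀` would give `¬¬A` and `Q a₁` would give `¬A`, so `Q` is not universal and GMP yields a
point `x` where `Q` fails. Deciding `D x` then reads off the answer: if `D x`, then `A` would
make `Q x` true, so `¬A`; if `¬D x`, then `¬A` would make `Q x` true, so `¬¬A`.
-/

theorem not_forall_of_pos_of_neg {α : Type*} {D : α → Prop} {A : Prop} {a₀ a₁ : α}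
    (hD0 : D a₀) (hD1 : ¬D a₁) : ¬∀ x, (D x → ¬¬A) ∧ (¬D x → ¬A) :=
  fun h => (h a₀).1 hD0 ((h a₁).2 hD1)

theorem not_or_not_not_of_not_cases {P A : Prop} (hP : P ∨ ¬P)
    (h : ¬((P → ¬¬A) ∧ (¬P → ¬A))) : ¬A ∨ ¬¬A := by
  rcases hP with hp | hnp
  · exact Or.inl fun a => h ⟨fun _ => not_not_intro a, fun hnp => absurd hp hnp⟩
  · exact Or.inr fun na => h ⟨fun hp => absurd hp hnp, fun _ => na⟩

theorem gmp_tt_implies_wlem (α : Type*) (a₀ a₁ : α) (D : α → Prop)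
    (hD0 : D a₀) (hD1 : ¬D a₁) (hDx : ∀ x, D x ∨ ¬D x) (A : Prop)
    (GMP : ¬(∀ x, (D x → ¬¬A) ∧ (¬D x → ¬A)) → ∃ x, ¬((D x → ¬¬A) ∧ (¬D x → ¬A))) :
    ¬A ∨ ¬¬A := by
  obtain ⟨x, hx⟩ := GMP (not_forall_of_pos_of_neg hD0 hD1)
  exact not_or_not_not_of_not_cases (hDx x) hx
end

section
/- Two-termed reduction of DNSE to WLEM: in a type α with elements a₀, a₁ and a decidable predicate D satisfying D a₀ and ¬D a₁, the Existential Double Negation Shift for Q x := (D x → ¬¬A) ∧ (¬D x → ¬A) implies ¬A ∨ ¬¬A, constructively. -/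
/-! `¬¬∃ x, Q x` holds outright: if it failed, `a₀` would refute `A`, and then `a₁` would be a
witness. Double negation shift then gives some `x` with `¬¬Q x`, and deciding `D x` selects the
disjunct: `Q x` forces `¬¬A` where `D` holds and `¬A` where it fails. -/

theorem not_not_exists_twoTermed {α : Type*} {a₀ a₁ : α} {D : α → Prop} (hD0 : D a₀)
    (hD1 : ¬D a₁) (A : Prop) : ¬¬∃ x, (D x → ¬¬A) ∧ (¬D x → ¬A) := fun hnone =>
  have hnA : ¬A := fun hA => hnone ⟨a₀, fun _ hnA => hnA hA, fun h => absurd hD0 h⟩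
  hnone ⟨a₁, fun h => absurd h hD1, fun _ => hnA⟩

theorem not_or_not_not_of_not_not_twoTermed {P A : Prop} (hP : P ∨ ¬P)
    (hQ : ¬¬((P → ¬¬A) ∧ (¬P → ¬A))) : ¬A ∨ ¬¬A := by
  rcases hP with hP | hnP
  · exact Or.inr fun hnA => hQ fun ⟨hpos, _⟩ => hpos hP hnA
  · exact Or.inl fun hA => hQ fun ⟨_, hneg⟩ => hneg hnP hA

theorem dnse_tt_implies_wlem (α : Type*) (a₀ a₁ : α) (D : α → Prop)
    (hD0 : D a₀) (hD1 : ¬D a₁) (hDx : ∀ x, D x ∨ ¬D x) (A : Prop)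
    (DNSE : ¬¬(∃ x, (D x → ¬¬A) ∧ (¬D x → ¬A)) → ∃ x, ¬¬((D x → ¬¬A) ∧ (¬D x → ¬A))) :
    ¬A ∨ ¬¬A := by
  obtain ⟨x, hx⟩ := DNSE (not_not_exists_twoTermed hD0 hD1 A)
  exact not_or_not_not_of_not_not_twoTermed (hDx x) hx
end

section
/- In a Kripke model whose frame is a linear order in which every nonempty set of worlds has a maximum (e.g., a finite linear order), with constant domain, the Drinker Paradox is forced at every world: for every world w and every monotone predicate interpretation P (monotone in the world argument), there exists a term y such that for all worlds v ≥ w, if P v y then P v x for all terms x. -/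
/-! Among the worlds above `w` at which some term fails `P`, take the greatest one `m` and a term
`y` failing there. If `y` held at some `v ≥ w` where some term fails, then `v ≤ m` and monotonicity
would give `P m y`. If no world above `w` has a failing term, every `y` works. -/

section

variable {W T : Type*} [Preorder W]

def IsDrinker (P : W → T → Prop) (w : W) (y : T) : Prop :=
  ∀ v, w ≤ v → P v y → ∀ x, P v x

theorem isDrinker_of_isGreatest {P : W → T → Prop} (hP : Monotone P) {w m : W} {y : T}
    (hm : IsGreatest {v | w ≤ v ∧ ¬∀ x, P v x} m) (hy : ¬P m y) : IsDrinker P w y := by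
  intro v hwv hvy
  by_contra hv
  exact hy (hP (hm.2 ⟨hwv, hv⟩) y hvy)

end

theorem dp_forced_in_max_linear_model_general
    (W : Type*) [LinearOrder W]
    (hmax : ∀ S : Set W, S.Nonempty → ∃ m ∈ S, ∀ w ∈ S, w ≤ m)
    (T : Type*) [Nonempty T]
    (P : W → T → Prop)
    (hmono : ∀ {w v : W} {t : T}, w ≤ v → P w t → P v t) :
    ∀ w : W, ∃ y : T, ∀ v : W, w ≤ v → (P v y → ∀ x : T, P v x) := by
  intro w
  have hP : Monotone P := fun _ _ h _ => hmono h
  by_cases hfail : {v | w ≤ v ∧ ¬∀ x, P v x}.Nonempty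
  · obtain ⟨m, hmS, hm⟩ := hmax _ hfail
    obtain ⟨y, hy⟩ := not_forall.mp hmS.2
    exact ⟨y, isDrinker_of_isGreatest hP ⟨hmS, hm⟩ hy⟩
  · refine ⟨Classical.arbitrary T, fun v hwv _ => ?_⟩
    by_contra hv
    exact hfail ⟨v, hwv, hv⟩

theorem dp_forced_in_max_linear_model
    (W : Type*) [LinearOrder W] [Nonempty W]
    (hmax : ∀ S : Set W, S.Nonempty → ∃ m ∈ S, ∀ w ∈ S, w ≤ m)
    (T : Type*) [Finite T] [Nonempty T]
    (P : W → T → Prop)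
    (hmono : ∀ {w v : W} {t : T}, w ≤ v → P w t → P v t) :
    ∀ w : W, ∃ y : T, ∀ v : W, w ≤ v → (P v y → ∀ x : T, P v x) :=
  dp_forced_in_max_linear_model_general W hmax T P hmono
end

section
/- Countermodel separating DP from HE: in the Kripke model over worlds ℕ with the usual order, constant domain ℕ, and forcing P n t defined as t ≤ n, the Drinker Paradox fails at world 0 (there is no term y with: for all worlds v, P v y → ∀ x, P v x), while for every monotone predicate Q : ℕ → ℕ → Prop in this frame, HE is forced at world 0 (there exists y such that for all v, (∃x, Q v x) → Q v y) — in particular HE holds for P. -/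
theorem not_forall_le_imp_forall_le {α : Type*} [Preorder α] [NoMaxOrder α] (y : α) :
    ¬∀ v : α, y ≤ v → ∀ x : α, x ≤ v :=
  fun h => not_isTop y (h y le_rfl)

/-- The witness is any term attaining the property at the least world where it is attained at
all; monotonicity carries it to every later world, and linearity makes every such world later. -/
theorem exists_forall_exists_imp_of_monotone {W T : Type*} [LinearOrder W] [WellFoundedLT W]
    [Nonempty T] (Q : W → T → Prop) (hQ : ∀ m n t, m ≤ n → Q m t → Q n t) :
    ∃ y : T, ∀ v : W, (∃ x, Q v x) → Q v y := by
  by_cases hS : {v | ∃ x, Q v x}.Nonempty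
  · obtain ⟨y, hy⟩ := (wellFounded_lt (α := W)).min_mem _ hS
    exact ⟨y, fun v hv => hQ _ _ _ ((wellFounded_lt (α := W)).min_le hv) hy⟩
  · exact ⟨Classical.arbitrary T, fun v hv => absurd ⟨v, hv⟩ hS⟩

theorem dp_fails_he_holds_countermodel :
    (¬∃ y : ℕ, ∀ v : ℕ, (y ≤ v → ∀ x : ℕ, x ≤ v)) ∧
    (∀ Q : ℕ → ℕ → Prop, (∀ m n t, m ≤ n → Q m t → Q n t) →
      ∃ y : ℕ, ∀ v : ℕ, (∃ x, Q v x) → Q v y) :=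
  ⟨fun ⟨y, hy⟩ => not_forall_le_imp_forall_le y hy, exists_forall_exists_imp_of_monotone⟩
end
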